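/- Let k ≥ 2, n = 4k, and let H ≤ Sym_n be the regular Cayley representation of Q_{4k}. Let i, j, l, m be integers with 1 ≤ j ≤ l < m ≤ n, 1 ≤ i ≤ 2 and n − 1 ≤ m. Let σ, τ, λ ∈ H with σ ≠ τ. Suppose that the sequence (σ(j), σ(j+1), ..., σ(l), τ(l+1), ..., τ(m)) equals the sequence (λ(i), λ(i+1), ..., λ(m − j + i)). Then j = l and l + 1 = m. -/

import Mathlib

/-- The position in `{1, ..., 4*k}` of an element of the generalized quaternion group
`Q_{4k}`, under the identification `t^i ↔ i+1` and `t^i * u ↔ i + 2k + 1`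
(for `0 ≤ i ≤ 2k-1`), where `t = QuaternionGroup.a 1` and `u = QuaternionGroup.xa 0`.
Note `QuaternionGroup.xa j = u * t^j = t^(-j) * u`. -/
def qpos (k : ℕ) : QuaternionGroup k → ℕ
  | .a i => i.val + 1
  | .xa i => (-i).val + 2 * k + 1

/-- The element of `Q_{4k}` at position `p ∈ {1, ..., 4*k}`. -/
def qofpos (k : ℕ) (p : ℕ) : QuaternionGroup k :=
  if p ≤ 2 * k then .a ((p - 1 : ℕ) : ZMod (2 * k))
  else .xa (-((p - 2 * k - 1 : ℕ) : ZMod (2 * k)))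

/-- The Cayley (left regular) representation of `Q_{4k}` as permutations of the
positions `{1, ..., 4*k}`: the element at position `p` is sent, by `g`, to the
position of `g * (element at position p)`. -/
def qact (k : ℕ) (g : QuaternionGroup k) (p : ℕ) : ℕ :=
  qpos k (g * qofpos k p)

lemma qpos_bounds (k : ℕ) (hk : 2 ≤ k) (x : QuaternionGroup k) :
    1 ≤ qpos k x ∧ qpos k x ≤ 4 * k := by
  haveI : NeZero (2 * k) := ⟨by omega⟩
  cases x with
  | a i => have := i.val_lt; simp only [qpos]; omega
  | xa i => have := (-i).val_lt; simp only [qpos]; omega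

/-- The generator `x_{σ(p)}` (as an element of `Fin (4*k)`, `0`-indexed) of the free
monoid, where `σ` is the permutation of `{1, ..., 4*k}` given by `g ∈ H`. -/
def qletter (k : ℕ) (hk : 2 ≤ k) (g : QuaternionGroup k) (p : ℕ) : Fin (4 * k) :=
  ⟨qact k g p - 1, by
    have h := qpos_bounds k hk (g * qofpos k p)
    simp only [qact]; omega⟩

/-- The word `x_{σ(a)} x_{σ(a+1)} ⋯ x_{σ(a+len-1)}` in the free monoid on
`x_1, ..., x_n` (letters indexed by `Fin (4*k)`, `0`-indexed). -/
def segWord (k : ℕ) (hk : 2 ≤ k) (g : QuaternionGroup k) (a len : ℕ) :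
    FreeMonoid (Fin (4 * k)) :=
  FreeMonoid.ofList ((List.range' a len).map (qletter k hk g))

/-- The word `x_1 x_2 ⋯ x_n`. -/
def baseWord (k : ℕ) : FreeMonoid (Fin (4 * k)) :=
  FreeMonoid.ofList (List.ofFn (fun m : Fin (4 * k) => m))

/-- The defining relations `x_1 ⋯ x_n = x_{σ(1)} ⋯ x_{σ(n)}`, `σ ∈ H`. -/
def qrel (k : ℕ) (hk : 2 ≤ k) (w v : FreeMonoid (Fin (4 * k))) : Prop :=
  w = baseWord k ∧ ∃ g : QuaternionGroup k, v = segWord k hk g 1 (4 * k)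

/-- The congruence on the free monoid generated by the defining relations. -/
def qcon (k : ℕ) (hk : 2 ≤ k) : Con (FreeMonoid (Fin (4 * k))) :=
  conGen (qrel k hk)

/-- The monoid `S_n(H) = ⟨a_1, ..., a_n ∣ a_1 ⋯ a_n = a_{σ(1)} ⋯ a_{σ(n)}, σ ∈ H⟩`
where `n = 4k` and `H` is the regular Cayley representation of `Q_{4k}` in `Sym_n`. -/
abbrev Smon (k : ℕ) (hk : 2 ≤ k) : Type := (qcon k hk).Quotient

/-! Write `e = qofpos k`. If `σ = λ` on a window shifted by `d = i - j`, then
`g * e p = f * e (p + d)` for consecutive positions `p`, so the steps `(e (p + 1))⁻¹ * e p`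
at `p` and at `p + d` coincide. These steps are `t⁻¹` below `2k`, `t` above `2k` and an element
outside `⟨t⟩` at `2k`, so they only record on which side of `2k` a position lies. Hence the shift
keeps every position of `[j, m)` on its side of `2k`, except the junction `l`, where `σ ≠ τ`
forces a change of side; since the window reaches `m ≥ n - 1`, this leaves room only for blocks
of one letter each. -/
open QuaternionGroup

lemma qpos_injective (k : ℕ) [NeZero k] : Function.Injective (qpos k) := by
  rintro (i | i) (j | j) h <;> simp only [qpos] at h
  · exact congrArg _ (ZMod.val_injective _ (by omega))
  · have := i.val_lt; have := (-j).val_lt; omega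
  · have := j.val_lt; have := (-i).val_lt; omega
  · exact congrArg _ (neg_injective (ZMod.val_injective _ (by omega)))

lemma qact_eq_qact_iff {k : ℕ} [NeZero k] {x y : QuaternionGroup k} {p q : ℕ} :
    qact k x p = qact k y q ↔ x * qofpos k p = y * qofpos k q :=
  (qpos_injective k).eq_iff

lemma eq_iff_inv_mul_eq_inv_mul_of_mul_eq {G : Type*} [Group G] {x y f a b c d : G}
    (hx : x * a = f * b) (hy : y * c = f * d) : x = y ↔ c⁻¹ * a = d⁻¹ * b := by
  rw [← eq_mul_inv_iff_mul_eq] at hx hy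
  rw [hx, hy, mul_assoc, mul_assoc, mul_right_inj, mul_inv_eq_iff_eq_mul, mul_assoc,
    ← inv_mul_eq_iff_eq_mul, eq_comm]

def qstep (k q : ℕ) : QuaternionGroup k :=
  (qofpos k (q + 1))⁻¹ * qofpos k q

lemma qstep_of_lt {k q : ℕ} (hq : 1 ≤ q) (hqk : q < 2 * k) : qstep k q = a (-1) := by
  rw [qstep, inv_mul_eq_iff_eq_mul, qofpos, qofpos, if_pos (by omega), if_pos (by omega), a_mul_a]
  congr 1
  rw [Nat.cast_sub hq]
  push_cast
  ring

lemma qstep_two_mul (k : ℕ) [NeZero k] : qstep k (2 * k) = xa ((k : ZMod (2 * k)) - 1) := by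
  have : 1 ≤ k := NeZero.one_le
  rw [qstep, inv_mul_eq_iff_eq_mul, qofpos, qofpos, if_pos le_rfl, if_neg (by omega),
    xa_mul_xa, show 2 * k + 1 - 2 * k - 1 = 0 by omega, Nat.cast_sub (by omega)]
  push_cast
  congr 1
  ring

lemma qstep_of_gt {k q : ℕ} (hqk : 2 * k < q) : qstep k q = a 1 := by
  rw [qstep, inv_mul_eq_iff_eq_mul, qofpos, qofpos, if_neg (by omega), if_neg (by omega),
    xa_mul_a, Nat.sub_add_comm (by omega), Nat.add_sub_cancel, Nat.cast_sub (by omega)]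
  push_cast
  congr 1
  ring

def SameSide (c p q : ℕ) : Prop :=
  (p < c ↔ q < c) ∧ (p = c ↔ q = c)

lemma qstep_eq_qstep_iff {k p q : ℕ} (hk : 2 ≤ k) (hp : 1 ≤ p) (hq : 1 ≤ q) :
    qstep k p = qstep k q ↔ SameSide (2 * k) p q := by
  have : NeZero k := ⟨by omega⟩
  have : Fact (2 < 2 * k) := ⟨by omega⟩
  have hne : a (-1 : ZMod (2 * k)) ≠ a 1 := fun h => ZMod.neg_one_ne_one (a.inj h)
  unfold SameSide
  rcases lt_trichotomy p (2 * k) with hp' | rfl | hp' <;>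
    rcases lt_trichotomy q (2 * k) with hq' | hq' | hq' <;>
    simp only [qstep_of_lt, qstep_of_gt, qstep_two_mul, *] <;>
    simp [hne.symm] <;> omega

lemma eq_iff_sameSide_of_qact_eq_qact {k : ℕ} (hk : 2 ≤ k) {x y f : QuaternionGroup k}
    {p q : ℕ} (hp : 1 ≤ p) (hq : 1 ≤ q) (hx : qact k x p = qact k f q)
    (hy : qact k y (p + 1) = qact k f (q + 1)) : x = y ↔ SameSide (2 * k) p q := by
  have : NeZero k := ⟨by omega⟩
  rw [eq_iff_inv_mul_eq_inv_mul_of_mul_eq (qact_eq_qact_iff.1 hx) (qact_eq_qact_iff.1 hy)]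
  exact qstep_eq_qstep_iff hk hp hq

lemma eq_and_succ_eq_of_sameSide_shift {c i j l m : ℕ} (hjl : j ≤ l) (hlm : l < m)
    (hm : m ≤ 2 * c) (hi1 : 1 ≤ i) (hi2 : i ≤ 2) (hm2 : 2 * c - 1 ≤ m)
    (hA : ∀ p, j ≤ p → p < l → SameSide c p (p - j + i))
    (hB : ∀ p, l < p → p < m → SameSide c p (p - j + i))
    (hl : ¬ SameSide c l (l - j + i)) : j = l ∧ l + 1 = m := by
  -- Only positions adjacent to the junction `l` or to `c` can witness a contradiction.
  have h1 := hA (l - 1)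
  have h2 := hA (c - 1)
  have h3 := hB c
  have h4 := hB (l + 1)
  unfold SameSide at *
  omega

/-- if `1 ≤ j ≤ l < m ≤ n`, `1 ≤ i ≤ 2`, `n - 1 ≤ m`, `σ ≠ τ`, and the
sequence `(σ(j), ..., σ(l), τ(l+1), ..., τ(m))` coincides with
`(λ(i), λ(i+1), ..., λ(m-j+i))`, then `j = l` and `l + 1 = m`. -/
theorem stmt6 (k : ℕ) (hk : 2 ≤ k) (g h f : QuaternionGroup k) (i j l m : ℕ)
    (hj : 1 ≤ j) (hjl : j ≤ l) (hlm : l < m) (hm : m ≤ 4 * k)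
    (hi1 : 1 ≤ i) (hi2 : i ≤ 2) (hm2 : 4 * k - 1 ≤ m)
    (hne : qact k g ≠ qact k h)
    (heq1 : ∀ p, j ≤ p → p ≤ l → qact k g p = qact k f (p - j + i))
    (heq2 : ∀ p, l + 1 ≤ p → p ≤ m → qact k h p = qact k f (p - j + i)) :
    j = l ∧ l + 1 = m := by
  have step : ∀ x y p, j ≤ p → qact k x p = qact k f (p - j + i) →
      qact k y (p + 1) = qact k f (p + 1 - j + i) → (x = y ↔ SameSide (2 * k) p (p - j + i)) := by
    intro x y p hp hx hy
    rw [show p + 1 - j + i = p - j + i + 1 by omega] at hy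
    exact eq_iff_sameSide_of_qact_eq_qact hk (by omega) (by omega) hx hy
  refine eq_and_succ_eq_of_sameSide_shift (c := 2 * k) hjl hlm (by omega) hi1 hi2 (by omega)
    ?_ ?_ ?_
  · intro p hjp hpl
    exact (step g g p hjp (heq1 p hjp hpl.le) (heq1 (p + 1) (by omega) hpl)).1 rfl
  · intro p hlp hpm
    exact (step h h p (by omega) (heq2 p hlp hpm.le) (heq2 (p + 1) (by omega) hpm)).1 rfl
  · intro hl
    exact hne <| congrArg (qact k) <|
      (step g h l hjl (heq1 l hjl le_rfl) (heq2 (l + 1) le_rfl hlm)).2 hl
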